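/- Let A(F) be the 27-dimensional Hopf algebra with basis ã^p b̃^r c̃^s (p,r,s ∈ {0,1,2}), q = e^{2πi/3}, with comultiplication inherited from A(SL_q(2)): Δã = ã⊗ã + b̃⊗c̃, Δb̃ = ã⊗b̃ + b̃⊗d̃, Δc̃ = c̃⊗ã + d̃⊗c̃, Δd̃ = c̃⊗b̃ + d̃⊗d̃, where d̃ = ã²(1+qb̃c̃). Then the linear functional h : A(F) → ℂ defined on the basis by h(ã^p b̃^r c̃^s) = δ_{p,0} δ_{r,2} δ_{s,2} is both a left and a right integral on A(F): (id ⊗ h)∘Δ = h(·)·1 and (h ⊗ id)∘Δ = h(·)·1. -/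

import Mathlib

open TensorProduct

noncomputable section

/-- `q = e^{2πi/3}`, a primitive cube root of unity. -/
def qc : ℂ := Complex.exp (2 * Real.pi * Complex.I / 3)

/-- generators `a, b, c, d` of the free algebra. -/
def ga : FreeAlgebra ℂ (Fin 4) := FreeAlgebra.ι ℂ 0
def gb : FreeAlgebra ℂ (Fin 4) := FreeAlgebra.ι ℂ 1
def gc : FreeAlgebra ℂ (Fin 4) := FreeAlgebra.ι ℂ 2
def gd : FreeAlgebra ℂ (Fin 4) := FreeAlgebra.ι ℂ 3

/-- The defining relations of `A(SL_q(2))`. -/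
inductive SLqRel : FreeAlgebra ℂ (Fin 4) → FreeAlgebra ℂ (Fin 4) → Prop
  | ab : SLqRel (ga * gb) (qc • (gb * ga))
  | ac : SLqRel (ga * gc) (qc • (gc * ga))
  | bd : SLqRel (gb * gd) (qc • (gd * gb))
  | bc : SLqRel (gb * gc) (gc * gb)
  | cd : SLqRel (gc * gd) (qc • (gd * gc))
  | comm : SLqRel (ga * gd - gd * ga) ((qc - qc⁻¹) • (gb * gc))
  | det : SLqRel (ga * gd - qc • (gb * gc)) 1
  | det' : SLqRel (gd * ga - qc⁻¹ • (gb * gc)) 1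

/-- the coordinate algebra `A(SL_q(2))` at `q = e^{2πi/3}`. -/
abbrev ASLq : Type := RingQuot SLqRel

def a' : ASLq := RingQuot.mkAlgHom ℂ SLqRel ga
def b' : ASLq := RingQuot.mkAlgHom ℂ SLqRel gb
def c' : ASLq := RingQuot.mkAlgHom ℂ SLqRel gc
def d' : ASLq := RingQuot.mkAlgHom ℂ SLqRel gd

/-- The relations defining the quotient `A(F)` of `A(SL_q(2))`:
`a³ = 1`, `b³ = 0`, `c³ = 0`, `d³ = 1`. -/
inductive FRel : ASLq → ASLq → Prop
  | a : FRel (a' ^ 3) 1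
  | b : FRel (b' ^ 3) 0
  | c : FRel (c' ^ 3) 0
  | d : FRel (d' ^ 3) 1

/-- the 27-dimensional Hopf algebra `A(F)`. -/
abbrev AF : Type := RingQuot FRel

def ta : AF := RingQuot.mkAlgHom ℂ FRel a'
def tb : AF := RingQuot.mkAlgHom ℂ FRel b'
def tc : AF := RingQuot.mkAlgHom ℂ FRel c'
def td : AF := RingQuot.mkAlgHom ℂ FRel d'



-- qc facts
lemma qc_pow_three : qc ^ 3 = 1 := by
  rw [qc, ← Complex.exp_nat_mul]
  rw [show (3:ℕ) * (2 * Real.pi * Complex.I / 3) = 2 * Real.pi * Complex.I by push_cast; ring]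
  exact Complex.exp_two_pi_mul_I
lemma qc_ne_one : qc ≠ 1 := by
  intro h
  rw [qc, Complex.exp_eq_one_iff] at h
  obtain ⟨n, hn⟩ := h
  have hπ : (Real.pi : ℂ) ≠ 0 := by exact_mod_cast Real.pi_ne_zero
  have hne : (2 * Real.pi * Complex.I : ℂ) ≠ 0 := by simp [hπ, Complex.I_ne_zero]
  have h1 : (2 * Real.pi * Complex.I : ℂ) * 1 = (2 * Real.pi * Complex.I) * (n * 3) := by
    linear_combination 3 * hn
  have h2 : (1 : ℂ) = n * 3 := mul_left_cancel₀ hne h1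
  have h3 : (1 : ℤ) = n * 3 := by exact_mod_cast h2
  omega
lemma qc_sq : qc ^ 2 = -1 - qc := by
  have h0 : (qc - 1) * (qc ^ 2 + qc + 1) = 0 := by linear_combination qc_pow_three
  rcases mul_eq_zero.1 h0 with h | h
  · exact absurd (by linear_combination h) qc_ne_one
  · linear_combination h
lemma qc_inv : qc⁻¹ = qc ^ 2 :=
  inv_eq_of_mul_eq_one_right (by linear_combination qc_pow_three)
lemma qc_pow_mod (n : ℕ) : qc ^ n = qc ^ (n % 3) := by
  conv_lhs => rw [← Nat.div_add_mod n 3]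
  rw [pow_add, pow_mul, qc_pow_three, one_pow, one_mul]

-- relations in AF
lemma relF {x y : FreeAlgebra ℂ (Fin 4)} (hr : SLqRel x y) :
    (RingQuot.mkAlgHom ℂ FRel) (RingQuot.mkAlgHom ℂ SLqRel x)
      = (RingQuot.mkAlgHom ℂ FRel) (RingQuot.mkAlgHom ℂ SLqRel y) := by
  rw [RingQuot.mkAlgHom_rel ℂ hr]
lemma rel_ab : ta * tb = qc • (tb * ta) := by
  simpa [ta, tb, a', b', map_mul, map_smul] using relF SLqRel.ab
lemma rel_ac : ta * tc = qc • (tc * ta) := by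
  simpa [ta, tc, a', c', map_mul, map_smul] using relF SLqRel.ac
lemma rel_cb : tc * tb = tb * tc := by
  simpa [tb, tc, b', c', map_mul] using (relF SLqRel.bc).symm
lemma rel_da : td * ta = 1 + qc ^ 2 • (tb * tc) := by
  have key := relF SLqRel.det'
  simp only [map_sub, map_mul, map_smul, map_one] at key
  rw [qc_inv] at key
  have h5 := eq_add_of_sub_eq key
  simpa [ta, tb, tc, td, a', b', c', d'] using h5
lemma rel_a3 : ta ^ 3 = 1 := by
  simpa [ta, map_pow] using RingQuot.mkAlgHom_rel ℂ FRel.a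
lemma rel_b3 : tb ^ 3 = 0 := by
  simpa [tb, map_pow] using RingQuot.mkAlgHom_rel ℂ FRel.b
lemma rel_c3 : tc ^ 3 = 0 := by
  simpa [tc, map_pow] using RingQuot.mkAlgHom_rel ℂ FRel.c

lemma sw_ba : tb * ta = qc ^ 2 • (ta * tb) := by
  rw [rel_ab, smul_smul, show qc ^ 2 * qc = 1 by linear_combination qc_pow_three, one_smul]
lemma sw_ca : tc * ta = qc ^ 2 • (ta * tc) := by
  rw [rel_ac, smul_smul, show qc ^ 2 * qc = 1 by linear_combination qc_pow_three, one_smul]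

lemma comm_cb : Commute tc tb := rel_cb

lemma b_pow_a (j : ℕ) : tb ^ j * ta = (qc ^ 2) ^ j • (ta * tb ^ j) := by
  induction j with
  | zero => simp
  | succ n ih =>
    calc tb ^ (n+1) * ta = tb ^ n * (tb * ta) := by rw [pow_succ, mul_assoc]
    _ = tb ^ n * (qc ^ 2 • (ta * tb)) := by rw [sw_ba]
    _ = qc ^ 2 • (tb ^ n * ta * tb) := by rw [mul_smul_comm, mul_assoc]
    _ = qc ^ 2 • ((qc ^ 2) ^ n • (ta * tb ^ n) * tb) := by rw [ih]
    _ = (qc ^ 2) ^ (n+1) • (ta * tb ^ (n+1)) := by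
          rw [smul_mul_assoc, smul_smul, mul_assoc, ← pow_succ, ← pow_succ']

lemma c_pow_a (k : ℕ) : tc ^ k * ta = (qc ^ 2) ^ k • (ta * tc ^ k) := by
  induction k with
  | zero => simp
  | succ n ih =>
    calc tc ^ (n+1) * ta = tc ^ n * (tc * ta) := by rw [pow_succ, mul_assoc]
    _ = tc ^ n * (qc ^ 2 • (ta * tc)) := by rw [sw_ca]
    _ = qc ^ 2 • (tc ^ n * ta * tc) := by rw [mul_smul_comm, mul_assoc]
    _ = qc ^ 2 • ((qc ^ 2) ^ n • (ta * tc ^ n) * tc) := by rw [ih]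
    _ = (qc ^ 2) ^ (n+1) • (ta * tc ^ (n+1)) := by
          rw [smul_mul_assoc, smul_smul, mul_assoc, ← pow_succ, ← pow_succ']

lemma cb_pow (k j : ℕ) : tc ^ k * tb ^ j = tb ^ j * tc ^ k := (comm_cb.pow_pow k j).eq

lemma bc_a (j k : ℕ) : (tb ^ j * tc ^ k) * ta = qc ^ (2*(j+k)) • (ta * (tb ^ j * tc ^ k)) := by
  calc (tb ^ j * tc ^ k) * ta = tb ^ j * (tc ^ k * ta) := by rw [mul_assoc]
  _ = tb ^ j * ((qc ^ 2) ^ k • (ta * tc ^ k)) := by rw [c_pow_a]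
  _ = (qc ^ 2) ^ k • ((tb ^ j * ta) * tc ^ k) := by rw [mul_smul_comm, mul_assoc]
  _ = (qc ^ 2) ^ k • (((qc ^ 2) ^ j • (ta * tb ^ j)) * tc ^ k) := by rw [b_pow_a]
  _ = ((qc ^ 2) ^ k * (qc ^ 2) ^ j) • (ta * (tb ^ j * tc ^ k)) := by
        rw [smul_mul_assoc, smul_smul, mul_assoc]
  _ = qc ^ (2*(j+k)) • (ta * (tb ^ j * tc ^ k)) := by
        rw [show 2*(j+k) = 2*k + 2*j by ring, pow_add, pow_mul, pow_mul]

lemma bc_a_pow (i j k : ℕ) :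
    (tb ^ j * tc ^ k) * ta ^ i = qc ^ (2*i*(j+k)) • (ta ^ i * (tb ^ j * tc ^ k)) := by
  induction i with
  | zero => simp
  | succ n ih =>
    calc (tb ^ j * tc ^ k) * ta ^ (n+1) = ((tb ^ j * tc ^ k) * ta ^ n) * ta := by
          rw [pow_succ, ← mul_assoc]
    _ = (qc ^ (2*n*(j+k)) • (ta ^ n * (tb ^ j * tc ^ k))) * ta := by rw [ih]
    _ = qc ^ (2*n*(j+k)) • (ta ^ n * ((tb ^ j * tc ^ k) * ta)) := by
          simp only [smul_mul_assoc, mul_assoc]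
    _ = qc ^ (2*n*(j+k)) • (ta ^ n * (qc ^ (2*(j+k)) • (ta * (tb ^ j * tc ^ k)))) := by
          rw [bc_a]
    _ = (qc ^ (2*n*(j+k)) * qc ^ (2*(j+k))) • (ta ^ (n+1) * (tb ^ j * tc ^ k)) := by
          rw [mul_smul_comm, smul_smul, ← mul_assoc, ← pow_succ]
    _ = qc ^ (2*(n+1)*(j+k)) • (ta ^ (n+1) * (tb ^ j * tc ^ k)) := by
          rw [← pow_add, show 2*n*(j+k) + 2*(j+k) = 2*(n+1)*(j+k) by ring]

lemma bcbc (j k j' k' : ℕ) :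
    (tb ^ j * tc ^ k) * (tb ^ j' * tc ^ k') = tb ^ (j+j') * tc ^ (k+k') := by
  calc (tb ^ j * tc ^ k) * (tb ^ j' * tc ^ k') = tb ^ j * ((tc ^ k * tb ^ j') * tc ^ k') := by
        rw [mul_assoc, mul_assoc]
  _ = tb ^ j * (tb ^ j' * (tc ^ k * tc ^ k')) := by rw [cb_pow, mul_assoc]
  _ = tb ^ (j+j') * tc ^ (k+k') := by rw [← mul_assoc, ← pow_add, ← pow_add]

/-- normal monomials -/
def m (i j k : ℕ) : AF := ta ^ i * (tb ^ j * tc ^ k)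

lemma m_mul (i j k i' j' k' : ℕ) :
    m i j k * m i' j' k' = qc ^ ((2*i'*(j+k)) % 3) • m (i+i') (j+j') (k+k') := by
  rw [← qc_pow_mod]
  unfold m
  calc (ta ^ i * (tb ^ j * tc ^ k)) * (ta ^ i' * (tb ^ j' * tc ^ k'))
      = ta ^ i * (((tb ^ j * tc ^ k) * ta ^ i') * (tb ^ j' * tc ^ k')) := by
        simp only [mul_assoc]
  _ = ta ^ i * ((qc ^ (2*i'*(j+k)) • (ta ^ i' * (tb ^ j * tc ^ k))) * (tb ^ j' * tc ^ k')) := by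
        rw [bc_a_pow]
  _ = qc ^ (2*i'*(j+k)) • ((ta ^ i * ta ^ i') * ((tb ^ j * tc ^ k) * (tb ^ j' * tc ^ k'))) := by
        simp only [smul_mul_assoc, mul_smul_comm, mul_assoc]
  _ = qc ^ (2*i'*(j+k)) • (ta ^ (i+i') * (tb ^ (j+j') * tc ^ (k+k'))) := by
        rw [bcbc]
        simp only [pow_add, mul_assoc]

lemma ta_eq : ta = m 1 0 0 := by simp [m]
lemma tb_eq : tb = m 0 1 0 := by simp [m]
lemma tc_eq : tc = m 0 0 1 := by simp [m]
lemma one_eq : (1 : AF) = m 0 0 0 := by simp [m]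

lemma td_eq : td = m 2 0 0 + qc • m 2 1 1 := by
  have h1 : td = (td * ta) * ta ^ 2 := by
    rw [mul_assoc, ← pow_succ', rel_a3, mul_one]
  have h2 := bc_a_pow 2 1 1
  simp only [pow_one] at h2
  rw [h1, rel_da, add_mul, one_mul, smul_mul_assoc, h2, smul_smul, ← pow_add]
  rw [qc_pow_mod 10]
  norm_num [m]

lemma m_a_red (i j k : ℕ) : m (i+3) j k = m i j k := by
  unfold m; rw [pow_add, rel_a3, mul_one]
lemma tb_pow_ge {j : ℕ} (hj : 3 ≤ j) : tb ^ j = 0 := by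
  obtain ⟨d, rfl⟩ := Nat.exists_eq_add_of_le hj
  rw [pow_add, rel_b3, zero_mul]
lemma tc_pow_ge {k : ℕ} (hk : 3 ≤ k) : tc ^ k = 0 := by
  obtain ⟨d, rfl⟩ := Nat.exists_eq_add_of_le hk
  rw [pow_add, rel_c3, zero_mul]
lemma m_b_zero (i j k : ℕ) (hj : 3 ≤ j) : m i j k = 0 := by
  unfold m; rw [tb_pow_ge hj, zero_mul, mul_zero]
lemma m_c_zero (i j k : ℕ) (hk : 3 ≤ k) : m i j k = 0 := by
  unfold m; rw [tc_pow_ge hk, mul_zero, mul_zero]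

lemma m_a4 (j k : ℕ) : m 4 j k = m 1 j k := m_a_red 1 j k
lemma m_a5 (j k : ℕ) : m 5 j k = m 2 j k := m_a_red 2 j k
lemma m_a6 (j k : ℕ) : m 6 j k = m 3 j k := m_a_red 3 j k
lemma m_a3' (j k : ℕ) : m 3 j k = m 0 j k := m_a_red 0 j k
lemma m_a7 (j k : ℕ) : m 7 j k = m 4 j k := m_a_red 4 j k
lemma m_a8 (j k : ℕ) : m 8 j k = m 5 j k := m_a_red 5 j k
lemma m_a9 (j k : ℕ) : m 9 j k = m 6 j k := m_a_red 6 j k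
lemma m_a10 (j k : ℕ) : m 10 j k = m 7 j k := m_a_red 7 j k
lemma m_a11 (j k : ℕ) : m 11 j k = m 8 j k := m_a_red 8 j k
lemma m_a12 (j k : ℕ) : m 12 j k = m 9 j k := m_a_red 9 j k
lemma m_b3 (i k : ℕ) : m i 3 k = 0 := m_b_zero i 3 k le_rfl
lemma m_b4 (i k : ℕ) : m i 4 k = 0 := m_b_zero i 4 k (by norm_num)
lemma m_b5 (i k : ℕ) : m i 5 k = 0 := m_b_zero i 5 k (by norm_num)
lemma m_b6 (i k : ℕ) : m i 6 k = 0 := m_b_zero i 6 k (by norm_num)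
lemma m_c3 (i j : ℕ) : m i j 3 = 0 := m_c_zero i j 3 le_rfl
lemma m_c4 (i j : ℕ) : m i j 4 = 0 := m_c_zero i j 4 (by norm_num)
lemma m_c5 (i j : ℕ) : m i j 5 = 0 := m_c_zero i j 5 (by norm_num)
lemma m_c6 (i j : ℕ) : m i j 6 = 0 := m_c_zero i j 6 (by norm_num)

def bas : Fin 3 × Fin 3 × Fin 3 → AF := fun t => m t.1 t.2.1 t.2.2

lemma m_mod (i j k : ℕ) : m i j k = m (i % 3) j k := by
  induction i using Nat.strong_induction_on with
  | _ i ih =>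
    rcases lt_or_ge i 3 with hi | hi
    · rw [Nat.mod_eq_of_lt hi]
    · obtain ⟨d, rfl⟩ := Nat.exists_eq_add_of_le hi
      rw [show 3 + d = d + 3 by ring, m_a_red, ih d (by omega), Nat.add_mod_right]

lemma mem_m (i j k : ℕ) : m i j k ∈ Submodule.span ℂ (Set.range bas) := by
  rcases lt_or_ge j 3 with hj | hj
  · rcases lt_or_ge k 3 with hk | hk
    · rw [m_mod]
      have : m (i % 3) j k = bas (⟨i % 3, by omega⟩, ⟨j, hj⟩, ⟨k, hk⟩) := rfl
      rw [this]
      exact Submodule.subset_span (Set.mem_range_self _)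
    · rw [m_c_zero i j k hk]; exact zero_mem _
  · rw [m_b_zero i j k hj]; exact zero_mem _

lemma V_mul {x y : AF} (hx : x ∈ Submodule.span ℂ (Set.range bas))
    (hy : y ∈ Submodule.span ℂ (Set.range bas)) :
    x * y ∈ Submodule.span ℂ (Set.range bas) := by
  induction hx using Submodule.span_induction with
  | mem u hu =>
    induction hy using Submodule.span_induction with
    | mem v hv =>
      obtain ⟨⟨p, r, s⟩, rfl⟩ := hu
      obtain ⟨⟨p', r', s'⟩, rfl⟩ := hv
      show m _ _ _ * m _ _ _ ∈ _
      rw [m_mul]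
      exact Submodule.smul_mem _ _ (mem_m _ _ _)
    | zero => rw [mul_zero]; exact zero_mem _
    | add v w _ _ h1 h2 => rw [mul_add]; exact add_mem h1 h2
    | smul c v _ h1 => rw [mul_smul_comm]; exact Submodule.smul_mem _ _ h1
  | zero => rw [zero_mul]; exact zero_mem _
  | add u w _ _ h1 h2 => rw [add_mul]; exact add_mem h1 h2
  | smul c u _ h1 => rw [smul_mul_assoc]; exact Submodule.smul_mem _ _ h1

lemma span_bas_top : Submodule.span ℂ (Set.range bas) = ⊤ := by
  have hsurj : Function.Surjective
      (⇑((RingQuot.mkAlgHom ℂ FRel).comp (RingQuot.mkAlgHom ℂ SLqRel))) := by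
    exact (RingQuot.mkAlgHom_surjective ℂ FRel).comp (RingQuot.mkAlgHom_surjective ℂ SLqRel)
  have main : ∀ x : FreeAlgebra ℂ (Fin 4),
      ((RingQuot.mkAlgHom ℂ FRel).comp (RingQuot.mkAlgHom ℂ SLqRel)) x
        ∈ Submodule.span ℂ (Set.range bas) := by
    intro x
    induction x using FreeAlgebra.induction with
    | grade0 r =>
      rw [AlgHom.commutes]
      rw [Algebra.algebraMap_eq_smul_one, one_eq]
      exact Submodule.smul_mem _ _ (mem_m 0 0 0)
    | grade1 i =>
      fin_cases i
      · show (RingQuot.mkAlgHom ℂ FRel) ((RingQuot.mkAlgHom ℂ SLqRel) ga) ∈ _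
        rw [show (RingQuot.mkAlgHom ℂ FRel) ((RingQuot.mkAlgHom ℂ SLqRel) ga) = ta from rfl,
          ta_eq]
        exact mem_m 1 0 0
      · show (RingQuot.mkAlgHom ℂ FRel) ((RingQuot.mkAlgHom ℂ SLqRel) gb) ∈ _
        rw [show (RingQuot.mkAlgHom ℂ FRel) ((RingQuot.mkAlgHom ℂ SLqRel) gb) = tb from rfl,
          tb_eq]
        exact mem_m 0 1 0
      · show (RingQuot.mkAlgHom ℂ FRel) ((RingQuot.mkAlgHom ℂ SLqRel) gc) ∈ _
        rw [show (RingQuot.mkAlgHom ℂ FRel) ((RingQuot.mkAlgHom ℂ SLqRel) gc) = tc from rfl,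
          tc_eq]
        exact mem_m 0 0 1
      · show (RingQuot.mkAlgHom ℂ FRel) ((RingQuot.mkAlgHom ℂ SLqRel) gd) ∈ _
        rw [show (RingQuot.mkAlgHom ℂ FRel) ((RingQuot.mkAlgHom ℂ SLqRel) gd) = td from rfl,
          td_eq]
        exact add_mem (mem_m 2 0 0) (Submodule.smul_mem _ _ (mem_m 2 1 1))
    | mul x y hx hy => rw [map_mul]; exact V_mul hx hy
    | add x y hx hy => rw [map_add]; exact add_mem hx hy
  rw [Submodule.eq_top_iff']
  intro x
  obtain ⟨y, rfl⟩ := hsurj x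
  exact main y

lemma qcr (n : ℕ) : qc ^ (n+3) = qc ^ n := by rw [pow_add, qc_pow_three, mul_one]
lemma qcr3 : qc^3 = qc^0 := qcr 0
lemma qcr4 : qc^4 = qc^1 := qcr 1
lemma qcr5 : qc^5 = qc^2 := qcr 2
lemma qcr6 : qc^6 = qc^3 := qcr 3
lemma qcr7 : qc^7 = qc^4 := qcr 4
lemma qcr8 : qc^8 = qc^5 := qcr 5
lemma qcr9 : qc^9 = qc^6 := qcr 6
lemma qcr10 : qc^10 = qc^7 := qcr 7
lemma qcr11 : qc^11 = qc^8 := qcr 8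
lemma qcr12 : qc^12 = qc^9 := qcr 9
lemma qcr13 : qc^13 = qc^10 := qcr 10
lemma qcr14 : qc^14 = qc^11 := qcr 11
lemma qcr15 : qc^15 = qc^12 := qcr 12
lemma qcr16 : qc^16 = qc^13 := qcr 13
lemma qcr17 : qc^17 = qc^14 := qcr 14
lemma qcr18 : qc^18 = qc^15 := qcr 15


set_option maxHeartbeats 4000000 in
/-- The linear functional `h` on `A(F)` defined on the basis by
`h(ã^p b̃^r c̃^s) = δ_{p,0} δ_{r,2} δ_{s,2}` is both a left and a right integral on `A(F)`,
i.e. `(id ⊗ h)∘Δ = h(·)·1` and `(h ⊗ id)∘Δ = h(·)·1`.  Here `Δ` is the comultiplication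
of `A(F)` inherited from `A(SL_q(2))`. -/
theorem AF_integral
    (Δ : AF →ₐ[ℂ] AF ⊗[ℂ] AF)
    (hΔa : Δ ta = ta ⊗ₜ[ℂ] ta + tb ⊗ₜ[ℂ] tc)
    (hΔb : Δ tb = ta ⊗ₜ[ℂ] tb + tb ⊗ₜ[ℂ] td)
    (hΔc : Δ tc = tc ⊗ₜ[ℂ] ta + td ⊗ₜ[ℂ] tc)
    (hΔd : Δ td = tc ⊗ₜ[ℂ] tb + td ⊗ₜ[ℂ] td)
    (h : AF →ₗ[ℂ] ℂ)
    (hh : ∀ p r s : Fin 3, h (ta ^ (p : ℕ) * tb ^ (r : ℕ) * tc ^ (s : ℕ)) =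
      if p = 0 ∧ r = 2 ∧ s = 2 then 1 else 0) :
    (∀ x : AF, (TensorProduct.rid ℂ AF) ((TensorProduct.map LinearMap.id h) (Δ x)) = h x • 1) ∧
    (∀ x : AF, (TensorProduct.lid ℂ AF) ((TensorProduct.map h LinearMap.id) (Δ x)) = h x • 1) := by
  have hm : ∀ i j k : ℕ, i < 3 → j < 3 → k < 3 →
      h (m i j k) = if i = 0 ∧ j = 2 ∧ k = 2 then (1:ℂ) else 0 := by
    intro i j k hi hj hk
    have := hh ⟨i, hi⟩ ⟨j, hj⟩ ⟨k, hk⟩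
    simpa [m, mul_assoc, Fin.ext_iff] using this
  constructor
  · intro x
    have hx : x ∈ Submodule.span ℂ (Set.range bas) := by rw [span_bas_top]; trivial
    induction hx using Submodule.span_induction with
    | mem u hu =>
      obtain ⟨⟨p, r, s⟩, rfl⟩ := hu
      fin_cases p <;> fin_cases r <;> fin_cases s <;>
      · simp only [bas, m, Fin.val_zero, Fin.val_one, Fin.val_two, Fin.isValue, pow_zero, pow_one,
          pow_two, one_mul, mul_one, map_mul, map_pow, map_one, hΔa, hΔb, hΔc]
        simp only [td_eq, ta_eq, tb_eq, tc_eq, one_eq]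
        simp [Algebra.TensorProduct.one_def, Algebra.TensorProduct.tmul_mul_tmul, add_mul,
          mul_add, smul_mul_assoc, mul_smul_comm, smul_smul, add_tmul, tmul_add, smul_tmul',
          tmul_smul, one_eq, m_mul, m_a3', m_a4, m_a5, m_a6, m_a7, m_a8, m_a9, m_a10, m_a11, m_a12,
          m_b3, m_b4, m_b5, m_b6, m_c3, m_c4, m_c5, m_c6,
          TensorProduct.map_tmul, TensorProduct.rid_tmul, TensorProduct.lid_tmul, hm]
        try (match_scalars <;> first
          | ring1
          | (ring_nf; simp only [qcr3, qcr4, qcr5, qcr6, qcr7, qcr8, qcr9, qcr10, qcr11,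
              qcr12, qcr13, qcr14, qcr15, qcr16, qcr17, qcr18, pow_zero, pow_one, qc_sq]; ring1)
          | (ring_nf; simp only [qcr3, qcr4, qcr5, qcr6, qcr7, qcr8, qcr9, qcr10, qcr11,
              qcr12, qcr13, qcr14, qcr15, qcr16, qcr17, qcr18, pow_zero, pow_one, qc_sq];
             ring_nf))
    | zero => simp
    | add u v _ _ h1 h2 => simp [map_add, h1, h2, add_smul]
    | smul c u _ h1 => simp [map_smul, h1, smul_smul]
  · intro x
    have hx : x ∈ Submodule.span ℂ (Set.range bas) := by rw [span_bas_top]; trivial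
    induction hx using Submodule.span_induction with
    | mem u hu =>
      obtain ⟨⟨p, r, s⟩, rfl⟩ := hu
      fin_cases p <;> fin_cases r <;> fin_cases s <;>
      · simp only [bas, m, Fin.val_zero, Fin.val_one, Fin.val_two, Fin.isValue, pow_zero, pow_one,
          pow_two, one_mul, mul_one, map_mul, map_pow, map_one, hΔa, hΔb, hΔc]
        simp only [td_eq, ta_eq, tb_eq, tc_eq, one_eq]
        simp [Algebra.TensorProduct.one_def, Algebra.TensorProduct.tmul_mul_tmul, add_mul,
          mul_add, smul_mul_assoc, mul_smul_comm, smul_smul, add_tmul, tmul_add, smul_tmul',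
          tmul_smul, one_eq, m_mul, m_a3', m_a4, m_a5, m_a6, m_a7, m_a8, m_a9, m_a10, m_a11, m_a12,
          m_b3, m_b4, m_b5, m_b6, m_c3, m_c4, m_c5, m_c6,
          TensorProduct.map_tmul, TensorProduct.rid_tmul, TensorProduct.lid_tmul, hm]
        try (match_scalars <;> first
          | ring1
          | (ring_nf; simp only [qcr3, qcr4, qcr5, qcr6, qcr7, qcr8, qcr9, qcr10, qcr11,
              qcr12, qcr13, qcr14, qcr15, qcr16, qcr17, qcr18, pow_zero, pow_one, qc_sq]; ring1)
          | (ring_nf; simp only [qcr3, qcr4, qcr5, qcr6, qcr7, qcr8, qcr9, qcr10, qcr11,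
              qcr12, qcr13, qcr14, qcr15, qcr16, qcr17, qcr18, pow_zero, pow_one, qc_sq];
             ring_nf))
    | zero => simp
    | add u v _ _ h1 h2 => simp [map_add, h1, h2, add_smul]
    | smul c u _ h1 => simp [map_smul, h1, smul_smul]

end
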